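/- Let n ≥ 1, let h̃ : [0,∞) → ℝ be smooth with h̃'(r) > 0 and h̃'(r) + r h̃''(r) > 0 for all r ≥ 0, and let σ̃, ψ̃ : [0,∞) → ℝ be smooth. Then for each j ∈ {1,…,n} the function z ↦ ((ψ̃'(|z|²) − (n − 1) σ̃'(|z|²)) / (e^{σ̃(|z|²)} (h̃'(|z|²) + |z|² h̃''(|z|²)))) · z_j is holomorphic on ℂⁿ if and only if there exist real constants C₁ and C̃ such that ψ̃(r) = (n − 1) σ̃(r) + C₁ ∫₀^r e^{σ̃(s)} (h̃'(s) + s h̃''(s)) ds + C̃ for all r ≥ 0. (The displayed function is the j-th component of the vector field (∂̄ψ − τ̄)^♯ for the conformally Kähler metric g_{j k̄} = e^{σ̃(|z|²)} ∂_j ∂_{k̄} h̃(|z|²) with radial weight ψ(z) = ψ̃(|z|²), where τ is the torsion (1,0)-form of g.) -/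

import Mathlib

/-!
Restricted to the complex line `z = u eⱼ`, the `j`-th component is `F(|u|²) u`, where `F` is the
radial coefficient. Dividing by `u` gives a holomorphic function on `ℂ ∖ {0}` with real values,
which is constant by the open mapping theorem; so `F ≡ C₁` on `(0, ∞)`, and on `[0, ∞)` by
continuity. Since the denominator `e^{σ̃}(h̃' + r h̃'')` is positive, `F ≡ C₁` says
`ψ̃' − (n − 1)σ̃' = C₁ e^{σ̃}(h̃' + r h̃'')`, which integrates to the stated formula.
-/

open Complex MeasureTheory Finset

noncomputable section

/-- `|z|² = Σ |zₖ|²` for `z ∈ ℂⁿ`. -/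
def normSq' {n : ℕ} (z : Fin n → ℂ) : ℝ := ∑ i, Complex.normSq (z i)

theorem normSq'_single {n : ℕ} (j : Fin n) (u : ℂ) : normSq' (Pi.single j u) = normSq u := by
  simp [normSq', Pi.single_apply, apply_ite]

theorem exists_forall_pos_eq_of_differentiable_ofReal_comp_normSq_mul {F : ℝ → ℝ}
    (hF : Differentiable ℂ fun u : ℂ => (F (normSq u) : ℂ) * u) :
    ∃ c, ∀ r, 0 < r → F r = c := by
  have hU : IsConnected ({0}ᶜ : Set ℂ) :=
    isConnected_compl_singleton_of_one_lt_rank (by simp [rank_real_complex]) 0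
  have han : AnalyticOnNhd ℂ (fun u : ℂ => (F (normSq u) : ℂ) * u / u) {0}ᶜ :=
    (hF.differentiableOn.div differentiableOn_id fun _ hu => hu).analyticOnNhd
      isOpen_compl_singleton
  obtain ⟨c, hc⟩ := han.eq_const_of_im_eq_const (c₀ := 0)
    (fun u hu => by simp [mul_div_cancel_right₀ _ (show u ≠ 0 from hu)])
    isOpen_compl_singleton hU
  refine ⟨c.re, fun r hr => ?_⟩
  have hsqrt : ((√r : ℝ) : ℂ) ≠ 0 := by exact_mod_cast (Real.sqrt_pos.2 hr).ne'
  have := hc _ hsqrt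
  rw [mul_div_cancel_right₀ _ hsqrt, normSq_ofReal, Real.mul_self_sqrt hr.le] at this
  rw [← this, ofReal_re]

theorem forall_differentiable_ofReal_comp_normSq'_mul_iff {n : ℕ} (hn : 0 < n) {F : ℝ → ℝ}
    (hF : ContinuousOn F (Set.Ici 0)) :
    (∀ j : Fin n, Differentiable ℂ fun z : Fin n → ℂ => (F (normSq' z) : ℂ) * z j) ↔
      ∃ c, ∀ r, 0 ≤ r → F r = c := by
  constructor
  · intro hdiff
    have hslice : Differentiable ℂ fun u : ℂ => (F (normSq u) : ℂ) * u := by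
      have hsingle : Differentiable ℂ fun u : ℂ => (Pi.single ⟨0, hn⟩ u : Fin n → ℂ) :=
        fun u => (hasFDerivAt_single (𝕜 := ℂ) (E := fun _ : Fin n => ℂ) u).differentiableAt
      simpa [Function.comp_def, normSq'_single] using (hdiff ⟨0, hn⟩).comp hsingle
    obtain ⟨c, hc⟩ := exists_forall_pos_eq_of_differentiable_ofReal_comp_normSq_mul hslice
    exact ⟨c, Set.EqOn.of_subset_closure hc hF continuousOn_const Set.Ioi_subset_Ici_self
      (closure_Ioi 0).superset⟩
  · rintro ⟨c, hc⟩ j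
    have hcoef : ∀ z : Fin n → ℂ, F (normSq' z) = c := fun z =>
      hc _ (Finset.sum_nonneg fun i _ => normSq_nonneg (z i))
    simp only [hcoef]
    fun_prop

theorem exists_eq_mul_integral_add_iff {G g w : ℝ → ℝ} (hG : ∀ r, HasDerivAt G (g r) r)
    (hw : Continuous w) :
    (∃ C₁ C' : ℝ, ∀ r, 0 ≤ r → G r = C₁ * (∫ s in (0 : ℝ)..r, w s) + C') ↔
      ∃ C₁ : ℝ, ∀ r, 0 ≤ r → g r = C₁ * w r := by
  have hI : ∀ C₁ C' r, HasDerivAt (fun r => C₁ * (∫ s in (0 : ℝ)..r, w s) + C') (C₁ * w r) r :=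
    fun C₁ C' r => ((hw.integral_hasStrictDerivAt 0 r).hasDerivAt.const_mul C₁).add_const C'
  constructor
  · rintro ⟨C₁, C', h⟩
    exact ⟨C₁, fun r hr => (uniqueDiffOn_Ici 0 r hr).eq_deriv _ (hG r).hasDerivWithinAt
      ((hI C₁ C' r).hasDerivWithinAt.congr h (h r hr))⟩
  · rintro ⟨C₁, h⟩
    have hGc : Continuous G := continuous_iff_continuousAt.2 fun r => (hG r).continuousAt
    refine ⟨C₁, G 0, fun r hr => ?_⟩
    refine eq_of_has_deriv_right_eq (fun x hx => h x hx.1 ▸ (hG x).hasDerivWithinAt)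
      (fun x _ => (hI C₁ (G 0) x).hasDerivWithinAt) hGc.continuousOn
      (by fun_prop) (by simp) r ⟨hr, le_rfl⟩

theorem stmt19_general (n : ℕ) (hn : 1 ≤ n) (ht : ℝ → ℝ)
    (hht : ContDiff ℝ (⊤ : ℕ∞) ht)
    (h2 : ∀ r : ℝ, 0 ≤ r → 0 < deriv ht r + r * deriv (deriv ht) r)
    (σt : ℝ → ℝ) (hσt : ContDiff ℝ (⊤ : ℕ∞) σt)
    (ψt : ℝ → ℝ) (hψt : ContDiff ℝ (⊤ : ℕ∞) ψt) :
    (∀ j : Fin n,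
      Differentiable ℂ
        (fun z : Fin n → ℂ =>
          (((deriv ψt (normSq' z) - ((n : ℝ) - 1) * deriv σt (normSq' z)) /
              (Real.exp (σt (normSq' z)) *
                (deriv ht (normSq' z) +
                  normSq' z * deriv (deriv ht) (normSq' z))) : ℝ) : ℂ) * z j)) ↔
      ∃ C₁ C' : ℝ, ∀ r : ℝ, 0 ≤ r →
        ψt r = ((n : ℝ) - 1) * σt r +
          C₁ * (∫ s in (0 : ℝ)..r,
            Real.exp (σt s) * (deriv ht s + s * deriv (deriv ht) s)) + C' := by
  have hw : Continuous fun r => Real.exp (σt r) * (deriv ht r + r * deriv (deriv ht) r) := by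
    have hht' : Continuous (deriv ht) := hht.continuous_deriv (by simp)
    have hht'' : Continuous (deriv (deriv ht)) := (hht.iterate_deriv 2).continuous
    fun_prop
  have hw_pos : ∀ r, 0 ≤ r → 0 < Real.exp (σt r) * (deriv ht r + r * deriv (deriv ht) r) :=
    fun r hr => mul_pos (Real.exp_pos _) (h2 r hr)
  have hG : ∀ r, HasDerivAt (fun r => ψt r - ((n : ℝ) - 1) * σt r)
      (deriv ψt r - ((n : ℝ) - 1) * deriv σt r) r := fun r =>
    (hψt.differentiable (by simp) r).hasDerivAt.sub
      ((hσt.differentiable (by simp) r).hasDerivAt.const_mul _)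
  have hF : ContinuousOn (fun r => (deriv ψt r - ((n : ℝ) - 1) * deriv σt r) /
      (Real.exp (σt r) * (deriv ht r + r * deriv (deriv ht) r))) (Set.Ici 0) :=
    ((hψt.continuous_deriv (by simp)).sub
      (continuous_const.mul (hσt.continuous_deriv (by simp)))).continuousOn.div
      hw.continuousOn fun r hr => (hw_pos r hr).ne'
  refine (forall_differentiable_ofReal_comp_normSq'_mul_iff hn hF).trans ?_
  refine (exists_congr fun _ => forall₂_congr fun r hr => div_eq_iff (hw_pos r hr).ne').trans ?_
  refine (exists_eq_mul_integral_add_iff hG hw).symm.trans ?_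
  exact exists₂_congr fun _ _ => forall₂_congr fun r _ => by constructor <;> intro h <;> linarith

/-- for the conformally `U(n)`-invariant Kähler metric
`g = e^{σ̃(|z|²)} ∂∂̄ h̃(|z|²)` on `ℂⁿ` with radial weight `ψ(z) = ψ̃(|z|²)`, the
components `((ψ̃' − (n−1)σ̃')/(e^{σ̃}(h̃' + r h̃''))) zⱼ` of `(∂̄ψ − τ̄)^♯` are
all entire iff
`ψ̃(r) = (n−1) σ̃(r) + C₁ ∫₀^r e^{σ̃(s)}(h̃'(s) + s h̃''(s)) ds + C̃`. -/
theorem stmt19 (n : ℕ) (hn : 1 ≤ n) (ht : ℝ → ℝ)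
    (hht : ContDiff ℝ (⊤ : ℕ∞) ht)
    (h1 : ∀ r : ℝ, 0 ≤ r → 0 < deriv ht r)
    (h2 : ∀ r : ℝ, 0 ≤ r → 0 < deriv ht r + r * deriv (deriv ht) r)
    (σt : ℝ → ℝ) (hσt : ContDiff ℝ (⊤ : ℕ∞) σt)
    (ψt : ℝ → ℝ) (hψt : ContDiff ℝ (⊤ : ℕ∞) ψt) :
    (∀ j : Fin n,
      Differentiable ℂ
        (fun z : Fin n → ℂ =>
          (((deriv ψt (normSq' z) - ((n : ℝ) - 1) * deriv σt (normSq' z)) /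
              (Real.exp (σt (normSq' z)) *
                (deriv ht (normSq' z) +
                  normSq' z * deriv (deriv ht) (normSq' z))) : ℝ) : ℂ) * z j)) ↔
      ∃ C₁ C' : ℝ, ∀ r : ℝ, 0 ≤ r →
        ψt r = ((n : ℝ) - 1) * σt r +
          C₁ * (∫ s in (0 : ℝ)..r,
            Real.exp (σt s) * (deriv ht s + s * deriv (deriv ht) s)) + C' :=
  stmt19_general n hn ht hht h2 σt hσt ψt hψt
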